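/- Every eigenvalue of the symmetric matrix X_n·X_nᵀ (n ≥ 2) lies in {0, n}: the eigenvalue n occurs with multiplicity n−1 and the eigenvalue 0 with multiplicity (n−1)(n−2)/2. -/

import Mathlib

open Matrix Polynomial

/-- Index type for the rows of `X n`: pairs `(i,j)` with `i < j` in `Fin n`. -/
abbrev PairIdx (n : ℕ) := {p : Fin n × Fin n // p.1 < p.2}

/-- The matrix `X n` over `ℝ` whose row indexed by `(i,j)` (with `i < j`) is `e i - e j`. -/
def XmatR (n : ℕ) : Matrix (PairIdx n) (Fin n) ℝ :=
  Matrix.of fun p k => (if k = p.1.1 then 1 else 0) - (if k = p.1.2 then 1 else 0)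

/-!
`A = X Xᵀ` satisfies `A² = n A`, because `Xᵀ X = n I - J` is the Laplacian of the complete
graph and the all-ones matrix `J` kills the columns of `Xᵀ`. Hence every eigenvalue of `A`
is a root of `μ² - n μ`, and since `A` is symmetric its characteristic polynomial is
`(X - n)^k X^(N - k)` with `N = n(n-1)/2`; the multiplicity `k` is read off from
`tr A = tr (Xᵀ X) = n (n - 1)`.
-/

open Finset

theorem spectrum.eq_zero_or_eq_of_mul_self_eq_smul {𝕜 A : Type*} [Field 𝕜] [Ring A]
    [Algebra 𝕜 A] {a : A} {c : 𝕜} (h : a * a = c • a) {μ : 𝕜} (hμ : μ ∈ spectrum 𝕜 a) :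
    μ = 0 ∨ μ = c := by
  cases subsingleton_or_nontrivial A with
  | inl _ => simp [spectrum.of_subsingleton] at hμ
  | inr _ =>
    have hμ' := spectrum.subset_polynomial_aeval a (X * (X - C c)) ⟨μ, hμ, rfl⟩
    have h_aeval : aeval a (X * (X - C c)) = 0 := by
      simp [mul_sub, h, Algebra.smul_def]
    rw [h_aeval, spectrum.zero_eq, Set.mem_singleton_iff] at hμ'
    simpa [sub_eq_zero] using hμ'

lemma Matrix.IsHermitian.charpoly_eq_of_mul_self_eq_smul {ι : Type*} [Fintype ι]
    [DecidableEq ι] {A : Matrix ι ι ℝ} {c : ℝ} (hA : A.IsHermitian) (hc : c ≠ 0)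
    (hAA : A * A = c • A) {k : ℕ} (hk : A.trace = k * c) :
    A.charpoly = (X - C c) ^ k * X ^ (Fintype.card ι - k) := by
  set S : Finset ι := {i | hA.eigenvalues i = c}
  have h_mem : ∀ i ∈ S, hA.eigenvalues i = c := fun i hi => (mem_filter.mp hi).2
  have h_mem_compl : ∀ i ∈ Sᶜ, hA.eigenvalues i = 0 := fun i hi =>
    (spectrum.eq_zero_or_eq_of_mul_self_eq_smul hAA
      (hA.eigenvalues_mem_spectrum_real i)).resolve_right (by simpa [S] using hi)
  have h_card : #S = k := by
    have h_trace : A.trace = #S * c := by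
      rw [hA.trace_eq_sum_eigenvalues, ← sum_add_sum_compl S]
      simp [sum_congr rfl h_mem, sum_congr rfl h_mem_compl]
    exact_mod_cast mul_right_cancel₀ hc (h_trace.symm.trans hk)
  rw [hA.charpoly_eq, ← prod_mul_prod_compl S,
    prod_eq_pow_card (b := X - C c) fun i hi => by simp [h_mem i hi],
    prod_eq_pow_card (b := X) fun i hi => by simp [h_mem_compl i hi], card_compl, h_card]

lemma two_nsmul_sum_lt_eq_sum_sum {α M : Type*} [Fintype α] [LinearOrder α]
    [AddCommMonoid M] (g : α → α → M) (hsymm : ∀ i j, g i j = g j i) (hdiag : ∀ i, g i i = 0) :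
    2 • ∑ p : {p : α × α // p.1 < p.2}, g p.1.1 p.1.2 = ∑ i, ∑ j, g i j := by
  have h_lt : ∑ p : {p : α × α // p.1 < p.2}, g p.1.1 p.1.2
      = ∑ i, ∑ j, if i < j then g i j else 0 := by
    rw [← sum_subtype ({q | q.1 < q.2} : Finset (α × α)) (by simp) fun q => g q.1 q.2,
      sum_filter, Fintype.sum_prod_type]
  have h_split (i j : α) :
      g i j = (if i < j then g i j else 0) + (if j < i then g j i else 0) := by
    rcases lt_trichotomy i j with h | rfl | h
    · simp [h, h.not_gt]
    · simp [hdiag]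
    · simp [h, h.not_gt, hsymm i j]
  rw [sum_congr rfl fun i _ => sum_congr rfl fun j _ => h_split i j]
  simp only [sum_add_distrib]
  rw [sum_comm (f := fun i j => if j < i then g j i else 0), two_nsmul, h_lt]

lemma Nat.choose_two_sub_pred (n : ℕ) : n.choose 2 - (n - 1) = (n - 1) * (n - 2) / 2 := by
  cases n with
  | zero => rfl
  | succ m => simp [Nat.choose_succ_succ', Nat.choose_two_right]

lemma card_pairIdx (n : ℕ) : Fintype.card (PairIdx n) = n.choose 2 := by
  rw [Fintype.card_subtype, Fintype.card_product_filter_lt, Fintype.card_fin]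

lemma XmatR_transpose_mul_self (n : ℕ) :
    (XmatR n)ᵀ * XmatR n = (n : ℝ) • 1 - of fun _ _ => 1 := by
  ext a b
  set g : Fin n → Fin n → ℝ := fun i j =>
    ((if a = i then 1 else 0) - (if a = j then 1 else 0)) *
      ((if b = i then 1 else 0) - (if b = j then 1 else 0))
  have h_sum : ∑ i, ∑ j, g i j = 2 * ((n : ℝ) * (if a = b then 1 else 0) - 1) := by
    simp [g, mul_sub, sum_sub_distrib]
    split_ifs <;> ring
  have h := two_nsmul_sum_lt_eq_sum_sum g (fun i j => by simp only [g]; ring)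
    (fun i => by simp [g])
  rw [h_sum, two_nsmul, ← two_mul] at h
  simp only [mul_apply, transpose_apply, XmatR, of_apply]
  rw [mul_left_cancel₀ two_ne_zero h]
  simp [one_apply]

lemma ones_mul_transpose_XmatR (n : ℕ) :
    (of fun _ _ => 1 : Matrix (Fin n) (Fin n) ℝ) * (XmatR n)ᵀ = 0 := by
  ext a p
  simp [mul_apply, XmatR, sum_sub_distrib]

lemma XmatR_mul_transpose_mul_self (n : ℕ) :
    XmatR n * (XmatR n)ᵀ * (XmatR n * (XmatR n)ᵀ) = (n : ℝ) • (XmatR n * (XmatR n)ᵀ) := by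
  rw [Matrix.mul_assoc, ← Matrix.mul_assoc (XmatR n)ᵀ, XmatR_transpose_mul_self,
    Matrix.sub_mul, Matrix.smul_mul, Matrix.one_mul, ones_mul_transpose_XmatR, sub_zero,
    Matrix.mul_smul]

lemma trace_XmatR_mul_transpose (n : ℕ) :
    (XmatR n * (XmatR n)ᵀ).trace = (n - 1 : ℕ) * (n : ℝ) := by
  rw [trace_mul_comm, XmatR_transpose_mul_self]
  cases n with
  | zero => simp
  | succ m => simp [trace]; ring

/-- For `n ≥ 2`, every eigenvalue of the symmetric matrix `X_n·X_nᵀ` lies in `{0, n}`,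
with `n` of multiplicity `n−1` and `0` of multiplicity `(n−1)(n−2)/2`: the
characteristic polynomial is `(X − n)^(n−1) · X^((n−1)(n−2)/2)`, and every eigenvalue
of the associated endomorphism is `0` or `n`. -/
theorem stmt13 (n : ℕ) (hn : 2 ≤ n) :
    (XmatR n * (XmatR n)ᵀ).charpoly
        = (X - C (n : ℝ)) ^ (n - 1) * X ^ ((n - 1) * (n - 2) / 2) ∧
    ∀ μ : ℝ, Module.End.HasEigenvalue
        (Matrix.mulVecLin (XmatR n * (XmatR n)ᵀ)) μ → μ = 0 ∨ μ = (n : ℝ) := by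
  have hA : (XmatR n * (XmatR n)ᵀ).IsHermitian := by
    simpa using isHermitian_mul_conjTranspose_self (XmatR n)
  have hn0 : (n : ℝ) ≠ 0 := Nat.cast_ne_zero.mpr (by omega)
  refine ⟨?_, fun μ hμ => ?_⟩
  · rw [hA.charpoly_eq_of_mul_self_eq_smul hn0 (XmatR_mul_transpose_mul_self n)
      (trace_XmatR_mul_transpose n), card_pairIdx, Nat.choose_two_sub_pred]
  · refine spectrum.eq_zero_or_eq_of_mul_self_eq_smul (XmatR_mul_transpose_mul_self n) ?_
    rw [← spectrum_toLin']
    exact hμ.mem_spectrum
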